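/- Let X be a formal vector field (an n-tuple of elements of R acting as a derivation on R). Let G₁,…,G_s ∈ R be prime elements of R, pairwise non-associated, and let c₁,…,c_s be nonzero complex numbers such that Σ_{i=1}^s cᵢ·X(Gᵢ)·∏_{j≠i} Gⱼ = 0. Then each Gᵢ is a semi-invariant of X: Gᵢ divides X(Gᵢ) in R, for every i = 1,…,s. -/

import Mathlib

open Finset

noncomputable def psPderiv {n : ℕ} (j : Fin n) (F : MvPowerSeries (Fin n) ℂ) :
    MvPowerSeries (Fin n) ℂ :=
  fun a => ((a j + 1 : ℕ) : ℂ) * MvPowerSeries.coeff (R := ℂ) (a + Finsupp.single j 1) F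

noncomputable def vfApply {n : ℕ} (V : Fin n → MvPowerSeries (Fin n) ℂ)
    (F : MvPowerSeries (Fin n) ℂ) : MvPowerSeries (Fin n) ℂ :=
  ∑ j, V j * psPderiv j F

noncomputable def vfLie {n : ℕ} (U V : Fin n → MvPowerSeries (Fin n) ℂ) :
    Fin n → MvPowerSeries (Fin n) ℂ :=
  fun j => vfApply U (V j) - vfApply V (U j)

noncomputable def diagVF {n : ℕ} (lam : Fin n → ℂ) : Fin n → MvPowerSeries (Fin n) ℂ :=
  fun j => MvPowerSeries.C (σ := Fin n) (R := ℂ) (lam j) * MvPowerSeries.X j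

def IsPDNormalForm {n : ℕ} (lam : Fin n → ℂ) (Xf : Fin n → MvPowerSeries (Fin n) ℂ) : Prop :=
  (∀ j, MvPowerSeries.coeff (R := ℂ) 0 (Xf j) = 0) ∧
  (∃ A : Matrix (Fin n) (Fin n) ℂ, IsNilpotent A ∧
      A * Matrix.diagonal lam = Matrix.diagonal lam * A ∧
      ∀ j l, MvPowerSeries.coeff (R := ℂ) (Finsupp.single l 1) (Xf j)
        = (if l = j then lam j else 0) + A j l) ∧
  (∀ j, vfLie (diagVF lam) Xf j = 0)

theorem dvd_of_sum_eq_zero_of_dvd_erase {R ι : Type*} [Ring R] [DecidableEq ι] {s : Finset ι} {f : ι → R} {p : R}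
    (hsum : ∑ j ∈ s, f j = 0) {i : ι} (hi : i ∈ s) (hdvd : ∀ j ∈ s.erase i, p ∣ f j) :
    p ∣ f i := by
  have hfi : f i = -∑ j ∈ s.erase i, f j :=
    eq_neg_of_add_eq_zero_left ((add_sum_erase s f hi).trans hsum)
  rw [hfi, dvd_neg]
  exact dvd_sum hdvd

section PrimeFactors

variable {R : Type*} [CommRing R] [IsDomain R] {ι : Type*}

theorem Prime.not_dvd_prod_of_forall_not_associated {p : R} (hp : Prime p) {s : Finset ι}
    {q : ι → R} (hq : ∀ j ∈ s, Irreducible (q j)) (hpq : ∀ j ∈ s, ¬Associated p (q j)) :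
    ¬p ∣ ∏ j ∈ s, q j := by
  intro hdvd
  obtain ⟨j, hj, hpj⟩ := hp.exists_mem_finset_dvd hdvd
  exact hpq j hj (hp.irreducible.associated_of_dvd (hq j hj) hpj)

/-- In `∑ i, a i * ∏ j ≠ i, G j = 0` every summand but the `i`-th contains the factor `G i`, so
`G i` divides `a i * ∏ j ≠ i, G j`; being prime and coprime to the other factors, it divides
`a i`. -/
theorem Prime.dvd_of_sum_mul_prod_erase_eq_zero [Fintype ι] [DecidableEq ι] {G a : ι → R}
    (hG : ∀ i, Prime (G i)) (hGassoc : ∀ i j, i ≠ j → ¬Associated (G i) (G j))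
    (hsum : ∑ i, a i * ∏ j ∈ univ.erase i, G j = 0) (i : ι) : G i ∣ a i := by
  have hdvd : G i ∣ a i * ∏ j ∈ univ.erase i, G j := by
    refine dvd_of_sum_eq_zero_of_dvd_erase hsum (mem_univ i) fun k hk => ?_
    have hik : i ∈ univ.erase k := mem_erase.mpr ⟨(ne_of_mem_erase hk).symm, mem_univ i⟩
    exact (dvd_prod_of_mem G hik).mul_left _
  refine ((hG i).dvd_or_dvd hdvd).resolve_right ?_
  exact (hG i).not_dvd_prod_of_forall_not_associated (fun j _ => (hG j).irreducible)
    fun j hj => hGassoc i j (ne_of_mem_erase hj).symm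

end PrimeFactors

/-- If `P = Π G i ^ c i` is a formal Darboux-type first integral of the formal vector field
`X` (with `G i` prime, pairwise non-associated, `c i ≠ 0`), written here in
cleared-denominator form, then each `G i` is a semi-invariant of `X`:
`G i` divides `X(G i)`. -/
theorem factors_are_semi_invariants {n s : ℕ}
    (Xf : Fin n → MvPowerSeries (Fin n) ℂ)
    (G : Fin s → MvPowerSeries (Fin n) ℂ) (hGprime : ∀ i, Prime (G i))
    (hGassoc : ∀ i j, i ≠ j → ¬ Associated (G i) (G j))
    (c : Fin s → ℂ) (hc : ∀ i, c i ≠ 0)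
    (hint : ∑ i, MvPowerSeries.C (σ := Fin n) (R := ℂ) (c i) * vfApply Xf (G i)
        * ∏ j ∈ Finset.univ.erase i, G j = 0) :
    ∀ i, G i ∣ vfApply Xf (G i) := by
  have : IsDomain (MvPowerSeries (Fin n) ℂ) := NoZeroDivisors.to_isDomain _
  intro i
  have hCunit : IsUnit (MvPowerSeries.C (σ := Fin n) (R := ℂ) (c i)) :=
    (hc i).isUnit.map MvPowerSeries.C
  exact hCunit.dvd_mul_left.mp (Prime.dvd_of_sum_mul_prod_erase_eq_zero hGprime hGassoc hint i)
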